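/- Let n ≥ 1 and j ≥ 1 be integers, let a, b ∈ M_n(ℂ) satisfy ab = ba, and let u, Q_0, Q_1, …, Q_j : ℝ² → M_n(ℂ) be smooth maps with Q_0 ≡ b that satisfy the recursion ∂_x Q_i + [u, Q_i] = [Q_{i+1}, a] for all 0 ≤ i ≤ j−1. Then for every λ ∈ ℂ and every (x,t) ∈ ℝ², ∂_t(aλ + u) − ∂_x(Σ_{i=0}^{j} Q_i λ^{j−i}) − [aλ + u, Σ_{i=0}^{j} Q_i λ^{j−i}] = ∂_t u − ∂_x Q_j − [u, Q_j]. Consequently, the connection 1-form θ_λ = (aλ + u) dx + (Σ_{i=0}^{j} Q_i λ^{j−i}) dt is flat for every λ ∈ ℂ if and only if u satisfies the (b,j)-flow equation ∂_t u = ∂_x Q_j + [u, Q_j]. -/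

import Mathlib

open Matrix Finset
open scoped ContDiff

attribute [local instance] Matrix.frobeniusNormedAddCommGroup Matrix.frobeniusNormedSpace

lemma flat_aux (n j : ℕ) (lam : ℂ) (hj : 1 ≤ j)
    (a u : Matrix (Fin n) (Fin n) ℂ) (Q D : ℕ → Matrix (Fin n) (Fin n) ℂ)
    (h0 : a * Q 0 = Q 0 * a)
    (hrec : ∀ i < j, D i + (u * Q i - Q i * u) = Q (i + 1) * a - a * Q (i + 1)) :
    (∑ i ∈ Finset.range (j + 1), lam ^ (j - i) • D i)
      + ((lam • a + u) * (∑ i ∈ Finset.range (j + 1), lam ^ (j - i) • Q i)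
         - (∑ i ∈ Finset.range (j + 1), lam ^ (j - i) • Q i) * (lam • a + u))
    = D j + (u * Q j - Q j * u) := by
  have expand :
      (∑ i ∈ Finset.range (j + 1), lam ^ (j - i) • D i)
        + ((lam • a + u) * (∑ i ∈ Finset.range (j + 1), lam ^ (j - i) • Q i)
           - (∑ i ∈ Finset.range (j + 1), lam ^ (j - i) • Q i) * (lam • a + u))
      = ∑ i ∈ Finset.range (j + 1),
          (lam ^ (j - i) • (D i + (u * Q i - Q i * u))
            + lam ^ (j - i) • (lam • (a * Q i - Q i * a))) := by
    rw [Finset.mul_sum, Finset.sum_mul, ← Finset.sum_sub_distrib, ← Finset.sum_add_distrib]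
    refine Finset.sum_congr rfl fun i _ => ?_
    simp only [mul_add, add_mul, smul_mul_assoc, mul_smul_comm, smul_smul, smul_add, smul_sub]
    module
  rw [expand, Finset.sum_add_distrib, Finset.sum_range_succ, Finset.sum_range_succ']
  have hH0 : lam ^ (j - 0) • (lam • (a * Q 0 - Q 0 * a)) = 0 := by
    rw [sub_eq_zero.2 h0]; simp
  have hGj : lam ^ (j - j) • (D j + (u * Q j - Q j * u)) = D j + (u * Q j - Q j * u) := by
    simp
  have hGH : ∀ i ∈ Finset.range j,
      lam ^ (j - i) • (D i + (u * Q i - Q i * u))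
        = - (lam ^ (j - (i + 1)) • (lam • (a * Q (i + 1) - Q (i + 1) * a))) := by
    intro i hi
    rw [Finset.mem_range] at hi
    rw [hrec i hi, smul_smul, ← pow_succ]
    have : j - (i + 1) + 1 = j - i := by omega
    rw [this, ← smul_neg, neg_sub]
  rw [Finset.sum_congr rfl hGH, hGj, hH0, Finset.sum_neg_distrib]
  abel

theorem stmt_0 (n j : ℕ) (hn : 1 ≤ n) (hj : 1 ≤ j)
    (a b : Matrix (Fin n) (Fin n) ℂ) (hab : a * b = b * a)
    (u : ℝ → ℝ → Matrix (Fin n) (Fin n) ℂ)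
    (Q : ℕ → ℝ → ℝ → Matrix (Fin n) (Fin n) ℂ)
    (hu : ContDiff ℝ ∞ (Function.uncurry u))
    (hQ : ∀ i ≤ j, ContDiff ℝ ∞ (Function.uncurry (Q i)))
    (hQ0 : ∀ x t, Q 0 x t = b)
    (hrec : ∀ i < j, ∀ x t : ℝ,
      deriv (fun s => Q i s t) x + (u x t * Q i x t - Q i x t * u x t)
        = Q (i + 1) x t * a - a * Q (i + 1) x t) :
    (∀ (lam : ℂ) (x t : ℝ),
        deriv (fun s => lam • a + u x s) t
          - deriv (fun s => ∑ i ∈ range (j + 1), lam ^ (j - i) • Q i s t) x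
          - ((lam • a + u x t) * (∑ i ∈ range (j + 1), lam ^ (j - i) • Q i x t)
            - (∑ i ∈ range (j + 1), lam ^ (j - i) • Q i x t) * (lam • a + u x t))
        = deriv (fun s => u x s) t - deriv (fun s => Q j s t) x
            - (u x t * Q j x t - Q j x t * u x t)) ∧
      ((∀ (lam : ℂ) (x t : ℝ),
          deriv (fun s => lam • a + u x s) t
            - deriv (fun s => ∑ i ∈ range (j + 1), lam ^ (j - i) • Q i s t) x
          = (lam • a + u x t) * (∑ i ∈ range (j + 1), lam ^ (j - i) • Q i x t)
            - (∑ i ∈ range (j + 1), lam ^ (j - i) • Q i x t) * (lam • a + u x t))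
        ↔ (∀ x t : ℝ,
            deriv (fun s => u x s) t
              = deriv (fun s => Q j s t) x + (u x t * Q j x t - Q j x t * u x t))) := by
  have hQx : ∀ i, i ≤ j → ∀ x t : ℝ, DifferentiableAt ℝ (fun s => Q i s t) x := by
    intro i hi x t
    exact (((hQ i hi).differentiable (by simp)) (x, t)).comp x
      (differentiableAt_id.prodMk (differentiableAt_const t) : DifferentiableAt ℝ (fun s : ℝ => (s, t)) x)
  have main : ∀ (lam : ℂ) (x t : ℝ),
      deriv (fun s => lam • a + u x s) t
        - deriv (fun s => ∑ i ∈ range (j + 1), lam ^ (j - i) • Q i s t) x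
        - ((lam • a + u x t) * (∑ i ∈ range (j + 1), lam ^ (j - i) • Q i x t)
          - (∑ i ∈ range (j + 1), lam ^ (j - i) • Q i x t) * (lam • a + u x t))
      = deriv (fun s => u x s) t - deriv (fun s => Q j s t) x
          - (u x t * Q j x t - Q j x t * u x t) := by
    intro lam x t
    have hd1 : deriv (fun s => lam • a + u x s) t = deriv (fun s => u x s) t := by
      exact deriv_const_add (lam • a)
    have hd2 : deriv (fun s => ∑ i ∈ range (j + 1), lam ^ (j - i) • Q i s t) x
        = ∑ i ∈ range (j + 1), lam ^ (j - i) • deriv (fun s => Q i s t) x := by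
      refine (deriv_fun_sum (A := fun i s => lam ^ (j - i) • Q i s t) (u := range (j + 1)) (fun i hi => ((hQx i (by have := Finset.mem_range.1 hi; omega) x t).const_smul
          (lam ^ (j - i))))).trans ?_
      exact Finset.sum_congr rfl fun i hi => deriv_fun_const_smul _
          (hQx i (by have := Finset.mem_range.1 hi; omega) x t)
    rw [hd1, hd2, sub_sub, sub_sub, sub_right_inj]
    exact flat_aux n j lam hj a (u x t) (fun i => Q i x t)
      (fun i => deriv (fun s => Q i s t) x)
      (by show a * Q 0 x t = Q 0 x t * a; rw [hQ0]; exact hab)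
      (fun i hi => hrec i hi x t)
  refine ⟨main, ?_, ?_⟩
  · intro h x t
    have h1 := main 0 x t
    rw [h 0 x t, sub_self, eq_comm, sub_sub, sub_eq_zero] at h1
    exact h1
  · intro h lam x t
    rw [← sub_eq_zero, main lam x t, sub_sub, sub_eq_zero]
    exact h x t
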